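/- For every d ≥ 3, in the subgroup G = ⟨b_1, ..., b_{d-1}⟩ of the Hanoi Towers group, the first-level stabilizer st_G(L_1) equals the normal closure in G of the set S = {b_i² : i = 1, ..., d-1} ∪ {(b_i b_{i+1})³ : i = 1, ..., d-2} ∪ {[b_i, b_j] : 1 ≤ i, j ≤ d-1, |i - j| > 1}. -/

import Mathlib

open Equiv

namespace TreeFract

variable {X : Type*}

/-- The automorphism group of the rooted `d`-adic tree with vertex set the free
monoid `List X`: permutations of the vertex set fixing the root and sending
children of a vertex to children of its image (this is exactly incidence
preservation for the rooted tree). -/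
def AutT (X : Type*) : Subgroup (Equiv.Perm (List X)) where
  carrier := {g | g [] = [] ∧ ∀ (u : List X) (x : X), ∃ y : X, g (u ++ [x]) = g u ++ [y]}
  one_mem' := ⟨rfl, fun _ x => ⟨x, rfl⟩⟩
  mul_mem' := by
    rintro f g ⟨hf1, hf2⟩ ⟨hg1, hg2⟩
    refine ⟨?_, fun u x => ?_⟩
    · show f (g []) = []
      rw [hg1, hf1]
    · obtain ⟨y, hy⟩ := hg2 u x
      obtain ⟨z, hz⟩ := hf2 (g u) y
      exact ⟨z, by show f (g (u ++ [x])) = f (g u) ++ [z]; rw [hy, hz]⟩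
  inv_mem' := by
    rintro g ⟨hg1, hg2⟩
    have hinj := g.injective
    refine ⟨?_, fun u x => ?_⟩
    · apply hinj
      show g (g⁻¹ []) = g []
      rw [Equiv.Perm.coe_inv, Equiv.apply_symm_apply, hg1]
    · have hne : g⁻¹ (u ++ [x]) ≠ [] := by
        intro h
        have h2 : u ++ [x] = g [] := by
          conv_lhs => rw [← Equiv.apply_symm_apply g (u ++ [x]), ← Equiv.Perm.coe_inv, h]
        rw [hg1] at h2
        simp at h2
      obtain ⟨y, hy⟩ : ∃ y, g⁻¹ (u ++ [x]) = (g⁻¹ (u ++ [x])).dropLast ++ [y] :=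
        ⟨(g⁻¹ (u ++ [x])).getLast hne, (List.dropLast_append_getLast hne).symm⟩
      obtain ⟨z, hz⟩ := hg2 ((g⁻¹ (u ++ [x])).dropLast) y
      have happ : g ((g⁻¹ (u ++ [x])).dropLast) ++ [z] = u ++ [x] := by
        rw [← hz, ← hy, Equiv.Perm.coe_inv, Equiv.apply_symm_apply]
      have h2 : g ((g⁻¹ (u ++ [x])).dropLast) = u ∧ ([z] : List X) = [x] :=
        List.append_inj' happ rfl
      refine ⟨y, ?_⟩
      rw [hy]
      congr 1
      apply hinj
      rw [h2.1, Equiv.Perm.coe_inv, Equiv.apply_symm_apply]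

/-- The underlying function of the section of `g` at the vertex `u`. -/
def sectFun (g : Equiv.Perm (List X)) (u : List X) : List X → List X :=
  fun v => (g (u ++ v)).drop (g u).length

open scoped Classical in
/-- The section `g_u` of a tree automorphism `g` at a vertex `u`, i.e. the unique
automorphism with `g (u ++ v) = g u ++ g_u v` for all `v`.  (By convention it is
the identity for permutations which are not tree automorphisms.) -/
noncomputable def sect (g : Equiv.Perm (List X)) (u : List X) : Equiv.Perm (List X) :=
  if h : Function.Bijective (sectFun g u) then Equiv.ofBijective _ h else 1

/-- The underlying function of the label of `g` at the vertex `u`. -/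
def labelFun (g : Equiv.Perm (List X)) (u : List X) : X → X :=
  fun x => (g (u ++ [x])).getLastD x

open scoped Classical in
/-- The label `g_(u)` of a tree automorphism `g` at a vertex `u`: the permutation
of `X` with `g (u ++ [x]) = g u ++ [g_(u) x]`.  (By convention it is the identity
for permutations which are not tree automorphisms.) -/
noncomputable def label (g : Equiv.Perm (List X)) (u : List X) : Equiv.Perm X :=
  if h : Function.Bijective (labelFun g u) then Equiv.ofBijective _ h else 1

/-- The stabilizer `st_G(u)` of the vertex `u` in `G`. -/
def stV (G : Subgroup (Equiv.Perm (List X))) (u : List X) : Subgroup (Equiv.Perm (List X)) where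
  carrier := {g | g ∈ G ∧ g u = u}
  one_mem' := ⟨one_mem G, rfl⟩
  mul_mem' := by
    rintro f g ⟨hf, hf2⟩ ⟨hg, hg2⟩
    exact ⟨mul_mem hf hg, by show f (g u) = u; rw [hg2, hf2]⟩
  inv_mem' := by
    rintro g ⟨hg, hg2⟩
    refine ⟨inv_mem hg, ?_⟩
    apply g.injective
    show g (g⁻¹ u) = g u
    rw [Equiv.Perm.coe_inv, Equiv.apply_symm_apply, hg2]

/-- The stabilizer `st_G(L_n)` of the `n`-th level in `G`. -/
def stL (G : Subgroup (Equiv.Perm (List X))) (n : ℕ) : Subgroup (Equiv.Perm (List X)) where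
  carrier := {g | g ∈ G ∧ ∀ u : List X, u.length = n → g u = u}
  one_mem' := ⟨one_mem G, fun _ _ => rfl⟩
  mul_mem' := by
    rintro f g ⟨hf, hf2⟩ ⟨hg, hg2⟩
    exact ⟨mul_mem hf hg, fun u hu => by show f (g u) = u; rw [hg2 u hu, hf2 u hu]⟩
  inv_mem' := by
    rintro g ⟨hg, hg2⟩
    refine ⟨inv_mem hg, fun u hu => ?_⟩
    apply g.injective
    show g (g⁻¹ u) = g u
    rw [Equiv.Perm.coe_inv, Equiv.apply_symm_apply, hg2 u hu]

/-- `G` is self-similar: sections of elements of `G` lie in `G`. -/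
def SelfSimilar (G : Subgroup (Equiv.Perm (List X))) : Prop :=
  ∀ g ∈ G, ∀ u : List X, sect g u ∈ G

/-- `G` acts transitively on the first level of the tree. -/
def FirstLevelTransitive (G : Subgroup (Equiv.Perm (List X))) : Prop :=
  ∀ x y : X, ∃ g ∈ G, g [x] = [y]

/-- `G` is level transitive: it acts transitively on every level of the tree. -/
def LevelTransitive (G : Subgroup (Equiv.Perm (List X))) : Prop :=
  ∀ (n : ℕ) (u v : List X), u.length = n → v.length = n → ∃ g ∈ G, g u = v

/-- `G` is fractal: `ψ_u(st_G(u)) = G` for every vertex `u`. -/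
def Fractal (G : Subgroup (Equiv.Perm (List X))) : Prop :=
  ∀ u : List X,
    (fun g => sect g u) '' (stV G u : Set (Equiv.Perm (List X))) = (G : Set (Equiv.Perm (List X)))

/-- `G` is strongly fractal: `ψ_x(st_G(L_1)) = G` for every first-level vertex `x`. -/
def StronglyFractal (G : Subgroup (Equiv.Perm (List X))) : Prop :=
  ∀ x : X,
    (fun g => sect g [x]) '' (stL G 1 : Set (Equiv.Perm (List X))) = (G : Set (Equiv.Perm (List X)))

/-- `G` is super strongly fractal: `ψ_u(st_G(L_n)) = G` for every `n` and every `u ∈ L_n`. -/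
def SuperStronglyFractal (G : Subgroup (Equiv.Perm (List X))) : Prop :=
  ∀ (n : ℕ) (u : List X), u.length = n →
    (fun g => sect g u) '' (stL G n : Set (Equiv.Perm (List X))) = (G : Set (Equiv.Perm (List X)))

/-- The normal closure `⟨S⟩^G` of a subset `S ⊆ G` in the subgroup `G`, realized as a
subgroup of the ambient group: the subgroup generated by all `G`-conjugates of `S`. -/
def normalClosureIn (G : Subgroup (Equiv.Perm (List X))) (S : Set (Equiv.Perm (List X))) :
    Subgroup (Equiv.Perm (List X)) :=
  Subgroup.closure {t | ∃ g ∈ G, ∃ s ∈ S, t = g * s * g⁻¹}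

end TreeFract
namespace TreeFract

/-! ### The Hanoi towers generators -/

section Hanoi

variable {d : ℕ}

/-- The underlying function of the automorphism `a_{ij}` of the Hanoi Towers group:
it swaps the first occurrence of `i` or `j` in a word. -/
def hanoiFun (i j : Fin d) : List (Fin d) → List (Fin d)
  | [] => []
  | x :: w => if x = i then j :: w else if x = j then i :: w else x :: hanoiFun i j w

lemma hanoiFun_invol (i j : Fin d) : ∀ w, hanoiFun i j (hanoiFun i j w) = w
  | [] => rfl
  | x :: w => by
    by_cases h1 : x = i
    · subst h1
      by_cases h2 : j = x
      · simp [hanoiFun, h2]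
      · simp [hanoiFun, h2]
    · by_cases h2 : x = j
      · subst h2
        simp [hanoiFun, h1]
      · simp [hanoiFun, h1, h2, hanoiFun_invol i j w]

/-- The automorphism `a_{ij}` of the `d`-adic tree: its label at the root is the
transposition `(x_i x_j)`, its sections at the first-level vertices `x_i` and `x_j`
are trivial and all its other first-level sections equal `a_{ij}` again. -/
def hanoiA (i j : Fin d) : Equiv.Perm (List (Fin d)) :=
  ⟨hanoiFun i j, hanoiFun i j, hanoiFun_invol i j, hanoiFun_invol i j⟩

end Hanoi

/-- The generator `b_i = a_{i,i+1}` (here `i` runs through `0, …, d-2`,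
corresponding to the paper's `b_1, …, b_{d-1}`). -/
def hanoiB (d : ℕ) (i : ℕ) (h : i + 1 < d) : Equiv.Perm (List (Fin d)) :=
  hanoiA ⟨i, Nat.lt_of_succ_lt h⟩ ⟨i + 1, h⟩

/-- The subgroup `G = ⟨b_1, …, b_{d-1}⟩` of the Hanoi Towers group. -/
def hanoiGroup (d : ℕ) : Subgroup (Equiv.Perm (List (Fin d))) :=
  Subgroup.closure {g | ∃ (i : ℕ) (h : i + 1 < d), g = hanoiB d i h}

/-! ### GGS groups (and the rooted automorphism `a`) -/

section GGS

variable {p : ℕ}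

/-- The function adding `m` to the first letter of a word over `ZMod p`. -/
def rotFun (m : ZMod p) : List (ZMod p) → List (ZMod p)
  | [] => []
  | x :: w => (x + m) :: w

/-- The rooted automorphism of the `p`-adic tree whose label at the root is the
`p`-cycle `x ↦ x + m`; for `m = 1` this is the generator `a` of a GGS-group
(identifying `x_i` with `i mod p`). -/
def rotPerm (m : ZMod p) : Equiv.Perm (List (ZMod p)) :=
  ⟨rotFun m, rotFun (-m),
    by intro w; cases w <;> simp [rotFun],
    by intro w; cases w <;> simp [rotFun]⟩

/-- The underlying function of the GGS generator `b` with defining vector `e`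
(the value `e 0` is irrelevant; `e i` for `i ≠ 0` are the coordinates
`e_1, …, e_{p-1}`): `b` fixes the first level, its section at `x_i` is
`a^{e_i}` for `i = 1, …, p-1` and its section at `x_p` (identified with `0`)
is `b` again. -/
def ggsFun (e : ZMod p → ZMod p) : List (ZMod p) → List (ZMod p)
  | [] => []
  | x :: w => if x = 0 then x :: ggsFun e w else x :: rotFun (e x) w

lemma ggsFun_inv (e : ZMod p → ZMod p) : ∀ w, ggsFun (fun i => -(e i)) (ggsFun e w) = w
  | [] => rfl
  | x :: w => by
    by_cases h : x = 0
    · simp only [ggsFun, if_pos h]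
      rw [ggsFun_inv e w]
    · simp only [ggsFun, if_neg h]
      cases w <;> simp [rotFun]

/-- The GGS generator `b` with defining vector `e`, as a tree automorphism. -/
def ggsB (e : ZMod p → ZMod p) : Equiv.Perm (List (ZMod p)) :=
  ⟨ggsFun e, ggsFun (fun i => -(e i)), ggsFun_inv e, by
    intro w
    have h := ggsFun_inv (fun i => -(e i)) w
    simpa using h⟩

end GGS

/-- The GGS-group `G = ⟨a, b⟩` over the `p`-adic tree with defining vector `e`. -/
def ggsGroup (p : ℕ) (e : ZMod p → ZMod p) : Subgroup (Equiv.Perm (List (ZMod p))) :=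
  Subgroup.closure {rotPerm 1, ggsB e}

/-! ### The first Grigorchuk group -/

/-- The three directed generators `b, c, d` (for `k % 3 = 0, 1, 2` respectively) of the
first Grigorchuk group, defined by the mutual recursion
`b = (a, c)`, `c = (a, d)`, `d = (1, b)` (identifying `x_1` with `0` and `x_2` with `1`). -/
def griFun : ℕ → List (ZMod 2) → List (ZMod 2)
  | _, [] => []
  | k, x :: w => if x = 0 then (if k % 3 = 2 then x :: w else x :: rotFun 1 w)
                 else x :: griFun (k + 1) w

lemma griFun_invol : ∀ (w : List (ZMod 2)) (k : ℕ), griFun k (griFun k w) = w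
  | [], _ => rfl
  | x :: w, k => by
    by_cases h : x = 0
    · by_cases h3 : k % 3 = 2
      · simp [griFun, h, h3]
      · simp only [griFun, if_pos h, if_neg h3]
        cases w with
        | nil => rfl
        | cons y v =>
            have hy : y + 1 + 1 = y := by
              rw [add_assoc]
              simp [show (1 : ZMod 2) + 1 = 0 from rfl]
            simp [rotFun, hy]
    · simp only [griFun, if_neg h]
      rw [griFun_invol w (k + 1)]

/-- The generator `b` of the first Grigorchuk group, with sections `(a, c)`. -/
def griB : Equiv.Perm (List (ZMod 2)) :=
  ⟨griFun 0, griFun 0, fun w => griFun_invol w 0, fun w => griFun_invol w 0⟩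

/-- The generator `c` of the first Grigorchuk group, with sections `(a, d)`. -/
def griC : Equiv.Perm (List (ZMod 2)) :=
  ⟨griFun 1, griFun 1, fun w => griFun_invol w 1, fun w => griFun_invol w 1⟩

/-- The generator `d` of the first Grigorchuk group, with sections `(1, b)`. -/
def griD : Equiv.Perm (List (ZMod 2)) :=
  ⟨griFun 2, griFun 2, fun w => griFun_invol w 2, fun w => griFun_invol w 2⟩

/-- The first Grigorchuk group `𝒢 = ⟨a, b, c, d⟩` acting on the binary tree. -/
def grigorchukGroup : Subgroup (Equiv.Perm (List (ZMod 2))) :=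
  Subgroup.closure {rotPerm 1, griB, griC, griD}

end TreeFract

/-!
Reading off the label at the root is a homomorphism `G → Sym(d)` whose kernel is `st_G(L_1)` and
which sends `b_i` to the adjacent transposition `(i i+1)`. The relators are the Coxeter relations
of type `A_{d-1}`; they hold among adjacent transpositions, so their normal closure `N` lies in the
kernel. Conversely, the images `s_i` of the `b_i` in `G/N` satisfy these relations, and then
`⟨s_i : i < m⟩` is the union of the cosets `s_k s_{k+1} ⋯ s_{m-1} H_m` (`k ≤ m`), where
`H_m = ⟨s_i : i + 1 < m⟩`. Under the root label `H_m` fixes `m` while the `k`-th representative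
sends `m` to `k`, so by induction on `m` the induced map `G/N → Sym(d)` is injective: the kernel
is `N`.
-/

section CoxeterA

open scoped commutatorElement

variable {Q : Type*} [Group Q] {d : ℕ}

structure CoxeterRelationsA (d : ℕ) (s : (i : ℕ) → i + 1 < d → Q) : Prop where
  sq_eq_one : ∀ i h, s i h ^ 2 = 1
  mul_pow_three_eq_one :
    ∀ i (h : i + 2 < d), (s (i + 1) h * s i (Nat.lt_of_succ_lt h)) ^ 3 = 1
  commute : ∀ i j (hi : i + 1 < d) (hj : j + 1 < d), i + 2 ≤ j → Commute (s i hi) (s j hj)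

def coxeterRelatorsA (d : ℕ) (s : (i : ℕ) → i + 1 < d → Q) : Set Q :=
  {t | ∃ (i : ℕ) (h : i + 1 < d), t = (s i h) ^ 2} ∪
  {t | ∃ (i : ℕ) (h : i + 2 < d), t = (s (i + 1) h * s i (Nat.lt_of_succ_lt h)) ^ 3} ∪
  {t | ∃ (i j : ℕ) (hi : i + 1 < d) (hj : j + 1 < d),
    (i + 1 < j ∨ j + 1 < i) ∧ t = ⁅s i hi, s j hj⁆}

theorem image_coxeterRelatorsA {P : Type*} [Group P] (f : Q →* P)
    (s : (i : ℕ) → i + 1 < d → Q) :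
    f '' coxeterRelatorsA d s = coxeterRelatorsA d (fun i h => f (s i h)) := by
  simp only [coxeterRelatorsA, Set.image_union]
  congr 1; congr 1
  all_goals ext t; simp [map_commutatorElement, eq_comm]

theorem coxeterRelatorsA_subset_ker_iff {P : Type*} [Group P] (f : Q →* P)
    (s : (i : ℕ) → i + 1 < d → Q) :
    coxeterRelatorsA d s ⊆ f.ker ↔ CoxeterRelationsA d (fun i h => f (s i h)) := by
  simp only [coxeterRelatorsA, Set.union_subset_iff, Set.ofPred_subset, forall_exists_index,
    SetLike.mem_coe, MonoidHom.mem_ker]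
  constructor
  · rintro ⟨⟨hsq, hbr⟩, hcomm⟩
    refine ⟨fun i h => by simpa using hsq _ i h rfl, fun i h => by simpa using hbr _ i h rfl,
      fun i j hi hj hij => ?_⟩
    rw [← commutatorElement_eq_one_iff_commute, ← map_commutatorElement]
    exact hcomm _ i j hi hj ⟨Or.inl (by omega), rfl⟩
  · rintro ⟨hsq, hbr, hcomm⟩
    refine ⟨⟨?_, ?_⟩, ?_⟩
    · rintro _ i h rfl
      simpa using hsq i h
    · rintro _ i h rfl
      simpa using hbr i h
    · rintro _ i j hi hj ⟨hij | hji, rfl⟩ <;>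
        rw [map_commutatorElement, commutatorElement_eq_one_iff_commute]
      · exact hcomm i j hi hj (by omega)
      · exact (hcomm j i hj hi (by omega)).symm

theorem coxeterRelationsA_swap (d : ℕ) :
    CoxeterRelationsA d
      (fun i h => Equiv.swap (⟨i, Nat.lt_of_succ_lt h⟩ : Fin d) ⟨i + 1, h⟩) where
  sq_eq_one i h := by rw [sq, Equiv.swap_mul_self]
  mul_pow_three_eq_one i h := by
    rw [Equiv.swap_comm (⟨i, _⟩ : Fin d)]
    have := (Equiv.Perm.isThreeCycle_swap_mul_swap_same (α := Fin d) (a := ⟨i + 1, by omega⟩)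
      (b := ⟨i + 1 + 1, h⟩) (c := ⟨i, by omega⟩) (by simp) (by simp)
      (by simp only [ne_eq, Fin.mk.injEq]; omega)).orderOf
    exact this ▸ pow_orderOf_eq_one _
  commute i j hi hj hij := by
    apply Equiv.Perm.Disjoint.commute
    apply Equiv.Perm.disjoint_swap_swap
    simp [Fin.ext_iff]
    omega

namespace CoxeterRelationsA

/-- `adjProd s k m = s k * s (k + 1) * ⋯ * s (m - 1)`; out-of-range factors are read as `1`. -/
def adjProd (s : (i : ℕ) → i + 1 < d → Q) (k m : ℕ) : Q :=
  ((List.range' k (m - k)).map fun i => if h : i + 1 < d then s i h else 1).prod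

def closureBelow (s : (i : ℕ) → i + 1 < d → Q) (m : ℕ) : Subgroup Q :=
  Subgroup.closure {x | ∃ (i : ℕ) (h : i + 1 < d), i + 1 < m ∧ x = s i h}

variable {s : (i : ℕ) → i + 1 < d → Q}

lemma adjProd_of_le {k m : ℕ} (h : m ≤ k) : adjProd s k m = 1 := by
  simp [adjProd, Nat.sub_eq_zero_of_le h]

lemma adjProd_eq_mul {k m : ℕ} (hkm : k < m) (hm : m < d) :
    adjProd s k m = s k (by omega) * adjProd s (k + 1) m := by
  rw [adjProd, show m - k = m - (k + 1) + 1 by omega, List.range'_succ, List.map_cons,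
    List.prod_cons, dif_pos (by omega)]
  rfl

section Swap

variable (φ : Q →* Equiv.Perm (Fin d))
  (hφ : ∀ i h, φ (s i h) = Equiv.swap ⟨i, Nat.lt_of_succ_lt h⟩ ⟨i + 1, h⟩)
include hφ

lemma map_adjProd_apply {k m : ℕ} (hkm : k ≤ m) (hm : m < d) :
    φ (adjProd s k m) ⟨m, hm⟩ = ⟨k, by omega⟩ := by
  rcases hkm.eq_or_lt with rfl | hlt
  · rw [adjProd_of_le le_rfl, map_one, Equiv.Perm.one_apply]
  · rw [adjProd_eq_mul hlt hm, map_mul, Equiv.Perm.mul_apply, map_adjProd_apply hlt hm, hφ,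
      Equiv.swap_apply_right]
termination_by m - k

lemma map_apply_self_of_mem_closureBelow {m : ℕ} (hm : m < d) {q : Q}
    (hq : q ∈ closureBelow s m) : φ q ⟨m, hm⟩ = ⟨m, hm⟩ := by
  have : closureBelow s m ≤
      (MulAction.stabilizer (Equiv.Perm (Fin d)) (⟨m, hm⟩ : Fin d)).comap φ := by
    refine Subgroup.closure_le _ |>.2 ?_
    rintro _ ⟨i, h, him, rfl⟩
    rw [SetLike.mem_coe, Subgroup.mem_comap, MulAction.mem_stabilizer_iff, Equiv.Perm.smul_def,
      hφ]
    exact Equiv.swap_apply_of_ne_of_ne (by simp only [ne_eq, Fin.mk.injEq]; omega)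
      (by simp only [ne_eq, Fin.mk.injEq]; omega)
  exact this hq

end Swap

variable (hs : CoxeterRelationsA d s)
include hs

lemma inv_eq (i : ℕ) (h : i + 1 < d) : (s i h)⁻¹ = s i h :=
  inv_eq_of_mul_eq_one_right (by rw [← sq]; exact hs.sq_eq_one i h)

lemma braid (i : ℕ) (h : i + 2 < d) :
    s (i + 1) h * s i (by omega) * s (i + 1) h = s i (by omega) * s (i + 1) h * s i (by omega) := by
  set a := s (i + 1) h
  set b := s i (by omega)
  calc a * b * a = (a * b * a * (b * a * b)) * (b * a * b)⁻¹ := by group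
    _ = b⁻¹ * a⁻¹ * b⁻¹ := by
      rw [show a * b * a * (b * a * b) = (a * b) ^ 3 by rw [pow_three]; group,
        hs.mul_pow_three_eq_one, one_mul]
      group
    _ = b * a * b := by rw [hs.inv_eq, hs.inv_eq]

lemma commute_adjProd {i k : ℕ} (hi : i + 1 < d) (hik : i + 2 ≤ k) (m : ℕ) :
    Commute (s i hi) (adjProd s k m) := by
  refine Commute.list_prod_right _ _ fun x hx => ?_
  obtain ⟨j, hj, rfl⟩ := List.mem_map.1 hx
  have hkj := (List.mem_range'_1.1 hj).1
  split_ifs with h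
  · exact hs.commute i j hi h (by omega)
  · exact Commute.one_right _

lemma mul_adjProd {j k m : ℕ} (hkj : k ≤ j) (hjm : j + 2 ≤ m) (hm : m < d) :
    s (j + 1) (by omega) * adjProd s k m = adjProd s k m * s j (by omega) := by
  rcases hkj.eq_or_lt with rfl | hlt
  · rw [adjProd_eq_mul (by omega) hm, adjProd_eq_mul (by omega) hm]
    set a := s k (by omega)
    set b := s (k + 1) (by omega)
    set p := adjProd s (k + 1 + 1) m
    have hap : a * p = p * a := (hs.commute_adjProd _ le_rfl m).eq
    calc b * (a * (b * p)) = (b * a * b) * p := by simp only [mul_assoc]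
      _ = a * b * (a * p) := by rw [hs.braid k (by omega), mul_assoc]
      _ = a * (b * p) * a := by rw [hap]; simp only [mul_assoc]
  · rw [adjProd_eq_mul (by omega) hm, ← mul_assoc,
      (hs.commute k (j + 1) (by omega) (by omega) (by omega)).eq.symm, mul_assoc,
      mul_adjProd (by omega : k + 1 ≤ j) hjm hm, mul_assoc]
termination_by j - k

lemma exists_mul_adjProd_mul_eq {m : ℕ} (hm : m < d) {i : ℕ} (hi : i < m) {k : ℕ}
    (hk : k ≤ m) {h : Q} (hh : h ∈ closureBelow s m) :
    ∃ k' ≤ m, ∃ h' ∈ closureBelow s m,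
      s i (by omega) * (adjProd s k m * h) = adjProd s k' m * h' := by
  have mem (j : ℕ) (hj : j + 1 < m) : s j (by omega) * h ∈ closureBelow s m :=
    mul_mem (Subgroup.subset_closure ⟨j, _, hj, rfl⟩) hh
  rcases Nat.lt_or_ge k i with hki | hik
  · obtain ⟨j, rfl⟩ : ∃ j, i = j + 1 := ⟨i - 1, by omega⟩
    refine ⟨k, hk, _, mem j (by omega), ?_⟩
    rw [← mul_assoc, hs.mul_adjProd (by omega) (by omega) hm, mul_assoc]
  rcases hik.eq_or_lt with rfl | hik
  · refine ⟨i + 1, by omega, h, hh, ?_⟩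
    rw [adjProd_eq_mul hi hm, ← mul_assoc, ← mul_assoc, ← sq, hs.sq_eq_one, one_mul]
  rcases (Nat.succ_le_of_lt hik).eq_or_lt with rfl | hik
  · refine ⟨i, hi.le, h, hh, ?_⟩
    rw [← mul_assoc, ← adjProd_eq_mul hi hm]
  · refine ⟨k, hk, _, mem i (by omega), ?_⟩
    rw [← mul_assoc, (hs.commute_adjProd _ hik m).eq, mul_assoc]

lemma exists_eq_adjProd_mul {m : ℕ} (hm : m < d) {q : Q} (hq : q ∈ closureBelow s (m + 1)) :
    ∃ k ≤ m, ∃ h ∈ closureBelow s m, q = adjProd s k m * h := by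
  induction hq using Subgroup.closure_induction_left with
  | one => exact ⟨m, le_rfl, 1, one_mem _, by rw [adjProd_of_le le_rfl, mul_one]⟩
  | mul_left x hx y _ ih =>
    obtain ⟨i, hi, him, rfl⟩ := hx
    obtain ⟨k, hk, h, hh, rfl⟩ := ih
    exact hs.exists_mul_adjProd_mul_eq hm (by omega) hk hh
  | inv_mul_cancel x hx y _ ih =>
    obtain ⟨i, hi, him, rfl⟩ := hx
    obtain ⟨k, hk, h, hh, rfl⟩ := ih
    rw [hs.inv_eq]
    exact hs.exists_mul_adjProd_mul_eq hm (by omega) hk hh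

theorem eq_one_of_map_eq_one (φ : Q →* Equiv.Perm (Fin d))
    (hφ : ∀ i h, φ (s i h) = Equiv.swap ⟨i, Nat.lt_of_succ_lt h⟩ ⟨i + 1, h⟩)
    {m : ℕ} (hm : m ≤ d) {q : Q} (hq : q ∈ closureBelow s m) (h1 : φ q = 1) : q = 1 := by
  induction m generalizing q with
  | zero =>
    have : {x | ∃ (i : ℕ) (h : i + 1 < d), i + 1 < 0 ∧ x = s i h} = ∅ := by simp
    rwa [closureBelow, this, Subgroup.closure_empty, Subgroup.mem_bot] at hq
  | succ m ih =>
    obtain ⟨k, hk, h, hh, rfl⟩ := hs.exists_eq_adjProd_mul hm hq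
    have hkm : k = m := by
      have := congr($h1 ⟨m, hm⟩)
      rw [map_mul, Equiv.Perm.mul_apply, map_apply_self_of_mem_closureBelow φ hφ hm hh,
        map_adjProd_apply φ hφ hk hm] at this
      simpa using this
    subst hkm
    rw [adjProd_of_le le_rfl, one_mul] at h1 ⊢
    exact ih (by omega) hh h1

end CoxeterRelationsA

open Subgroup in
theorem ker_eq_normalClosure_coxeterRelatorsA {G : Type*} [Group G]
    (s : (i : ℕ) → i + 1 < d → G) (hgen : closure {g | ∃ i h, g = s i h} = ⊤)
    (φ : G →* Equiv.Perm (Fin d))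
    (hφ : ∀ i h, φ (s i h) = Equiv.swap ⟨i, Nat.lt_of_succ_lt h⟩ ⟨i + 1, h⟩) :
    φ.ker = normalClosure (coxeterRelatorsA d s) := by
  have hR : coxeterRelatorsA d s ⊆ φ.ker := by
    rw [coxeterRelatorsA_subset_ker_iff]
    simp only [hφ]
    exact coxeterRelationsA_swap d
  refine le_antisymm (fun g hg => ?_) (normalClosure_le_normal hR)
  set N := normalClosure (coxeterRelatorsA d s)
  set π := QuotientGroup.mk' N
  have hrel : CoxeterRelationsA d (fun i h => π (s i h)) := by
    rw [← coxeterRelatorsA_subset_ker_iff, QuotientGroup.ker_mk']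
    exact subset_normalClosure
  have hπg : π g ∈ CoxeterRelationsA.closureBelow (fun i h => π (s i h)) d := by
    have := mem_map_of_mem π (hgen ▸ mem_top g)
    rw [MonoidHom.map_closure] at this
    refine closure_mono ?_ this
    rintro _ ⟨_, ⟨i, h, rfl⟩, rfl⟩
    exact ⟨i, h, h, rfl⟩
  rw [← QuotientGroup.eq_one_iff]
  exact hrel.eq_one_of_map_eq_one (QuotientGroup.lift N φ (normalClosure_le_normal hR)) hφ
    le_rfl hπg hg

end CoxeterA

namespace TreeFract

section RootLabel

variable {X : Type*} {g : Equiv.Perm (List X)}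

lemma labelFun_eq_of_apply {u : List X} {x y : X} (h : g (u ++ [x]) = g u ++ [y]) :
    labelFun g u x = y := by
  simp [labelFun, h]

lemma bijective_labelFun (hg : g ∈ AutT X) (u : List X) : Function.Bijective (labelFun g u) := by
  refine ⟨fun x₁ x₂ hx => ?_, fun y => ?_⟩
  · obtain ⟨y₁, h₁⟩ := hg.2 u x₁
    obtain ⟨y₂, h₂⟩ := hg.2 u x₂
    rw [labelFun_eq_of_apply h₁, labelFun_eq_of_apply h₂] at hx
    subst hx
    simpa using g.injective (h₁.trans h₂.symm)
  · obtain ⟨z, hz⟩ := (inv_mem hg).2 (g u) y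
    rw [Equiv.Perm.inv_eq_iff_eq, Equiv.Perm.coe_inv, Equiv.symm_apply_apply] at hz
    exact ⟨z, labelFun_eq_of_apply hz.symm⟩

lemma label_eq_of_apply (hg : g ∈ AutT X) {u : List X} {x y : X}
    (h : g (u ++ [x]) = g u ++ [y]) : label g u x = y := by
  rw [label, dif_pos (bijective_labelFun hg u)]
  exact labelFun_eq_of_apply h

lemma apply_append_singleton (hg : g ∈ AutT X) (u : List X) (x : X) :
    g (u ++ [x]) = g u ++ [label g u x] := by
  obtain ⟨y, hy⟩ := hg.2 u x
  rw [hy, label_eq_of_apply hg hy]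

lemma apply_singleton (hg : g ∈ AutT X) (x : X) : g [x] = [label g [] x] := by
  simpa [hg.1] using apply_append_singleton hg [] x

lemma label_nil_eq_of_apply (hg : g ∈ AutT X) {x y : X} (h : g [x] = [y]) : label g [] x = y := by
  simpa [apply_singleton hg] using h

variable (X) in
noncomputable def rootLabel : AutT X →* Equiv.Perm X where
  toFun g := label g.1 []
  map_one' := Equiv.ext fun _ => label_nil_eq_of_apply (one_mem _) rfl
  map_mul' f g := Equiv.ext fun x => label_nil_eq_of_apply (mul_mem f.2 g.2) <| by
    rw [Equiv.Perm.mul_apply, apply_singleton g.2, apply_singleton f.2]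
    rfl

theorem stL_one_eq_map_ker {G : Subgroup (Equiv.Perm (List X))} (hG : G ≤ AutT X) :
    stL G 1 = ((rootLabel X).comp (Subgroup.inclusion hG)).ker.map G.subtype := by
  ext g
  constructor
  · rintro ⟨hg, hfix⟩
    exact ⟨⟨g, hg⟩, Equiv.ext fun x => label_nil_eq_of_apply (hG hg) (hfix [x] rfl), rfl⟩
  · rintro ⟨⟨g, hg⟩, hker, rfl⟩
    refine ⟨hg, fun u hu => ?_⟩
    obtain ⟨x, rfl⟩ := List.length_eq_one_iff.1 hu
    have hlabel : label g [] = 1 := hker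
    simp [apply_singleton (hG hg), hlabel]

end RootLabel

theorem normalClosureIn_image_subtype {X : Type*} (G : Subgroup (Equiv.Perm (List X)))
    (T : Set G) :
    normalClosureIn G (G.subtype '' T) = (Subgroup.normalClosure T).map G.subtype := by
  rw [normalClosureIn, Subgroup.normalClosure, MonoidHom.map_closure]
  congr 1
  ext t
  constructor
  · rintro ⟨g, hg, _, ⟨s, hs, rfl⟩, rfl⟩
    refine ⟨⟨g, hg⟩ * s * ⟨g, hg⟩⁻¹, ?_, rfl⟩
    exact Group.mem_conjugatesOfSet_iff.2 ⟨s, hs, isConj_iff.2 ⟨_, rfl⟩⟩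
  · rintro ⟨c, hc, rfl⟩
    obtain ⟨s, hs, hsc⟩ := Group.mem_conjugatesOfSet_iff.1 hc
    obtain ⟨g, rfl⟩ := isConj_iff.1 hsc
    exact ⟨g, g.2, s, ⟨s, hs, rfl⟩, rfl⟩

section Hanoi

variable {d : ℕ}

lemma hanoiA_singleton (i j x : Fin d) : hanoiA i j [x] = [Equiv.swap i j x] := by
  change hanoiFun i j [x] = _
  by_cases hi : x = i
  · simp [hanoiFun, hi]
  · by_cases hj : x = j
    · simp [hanoiFun, hj]
    · simp [hanoiFun, hi, hj, Equiv.swap_apply_of_ne_of_ne hi hj]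

lemma hanoiA_append_singleton (i j : Fin d) (u : List (Fin d)) (x : Fin d) :
    ∃ y, hanoiA i j (u ++ [x]) = hanoiA i j u ++ [y] := by
  induction u with
  | nil => exact ⟨_, hanoiA_singleton i j x⟩
  | cons z u ih =>
    obtain ⟨y, hy⟩ := ih
    change ∃ y, hanoiFun i j (z :: (u ++ [x])) = hanoiFun i j (z :: u) ++ [y]
    change hanoiFun i j (u ++ [x]) = hanoiFun i j u ++ [y] at hy
    simp only [hanoiFun]
    split_ifs
    · exact ⟨x, rfl⟩
    · exact ⟨x, rfl⟩
    · exact ⟨y, by rw [hy]; rfl⟩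

lemma hanoiA_mem_autT (i j : Fin d) : hanoiA i j ∈ AutT (Fin d) :=
  ⟨rfl, hanoiA_append_singleton i j⟩

lemma label_hanoiA_nil (i j : Fin d) : label (hanoiA i j) [] = Equiv.swap i j :=
  Equiv.ext fun x => label_nil_eq_of_apply (hanoiA_mem_autT i j) (hanoiA_singleton i j x)

lemma hanoiGroup_le_autT : hanoiGroup d ≤ AutT (Fin d) :=
  Subgroup.closure_le _ |>.2 fun _ ⟨_, _, hg⟩ => hg ▸ hanoiA_mem_autT _ _

end Hanoi

open scoped commutatorElement in
theorem hanoiGroup_stL_one_general (d : ℕ) :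
    stL (hanoiGroup d) 1 =
      normalClosureIn (hanoiGroup d)
        ({t | ∃ (i : ℕ) (h : i + 1 < d), t = (hanoiB d i h) ^ 2} ∪
         {t | ∃ (i : ℕ) (h : i + 2 < d),
            t = (hanoiB d (i + 1) h * hanoiB d i (Nat.lt_of_succ_lt h)) ^ 3} ∪
         {t | ∃ (i j : ℕ) (hi : i + 1 < d) (hj : j + 1 < d),
            (i + 1 < j ∨ j + 1 < i) ∧ t = ⁅hanoiB d i hi, hanoiB d j hj⁆}) := by
  let b : (i : ℕ) → i + 1 < d → hanoiGroup d := fun i h =>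
    ⟨hanoiB d i h, Subgroup.subset_closure ⟨i, h, rfl⟩⟩
  have hgen : Subgroup.closure {g | ∃ i h, g = b i h} = ⊤ := by
    have : {g | ∃ i h, g = b i h} =
        (↑) ⁻¹' {g | ∃ (i : ℕ) (h : i + 1 < d), g = hanoiB d i h} := by
      ext g
      simp [b, Subtype.ext_iff]
    rw [this]
    exact Subgroup.closure_closure_coe_preimage
  rw [stL_one_eq_map_ker hanoiGroup_le_autT,
    ker_eq_normalClosure_coxeterRelatorsA b hgen _ fun i h => label_hanoiA_nil _ _,
    ← normalClosureIn_image_subtype, image_coxeterRelatorsA]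
  rfl

open scoped commutatorElement in
/-- For every `d ≥ 3`, in `G = ⟨b_1, …, b_{d-1}⟩ ≤ Aut T` the first
level stabilizer `st_G(L_1)` is the normal closure in `G` of
`{b_i²} ∪ {(b_i b_{i+1})³} ∪ {[b_i, b_j] : |i-j| > 1}` (indices shifted to start at `0`). -/
theorem hanoiGroup_stL_one (d : ℕ) (hd : 3 ≤ d) :
    stL (hanoiGroup d) 1 =
      normalClosureIn (hanoiGroup d)
        ({t | ∃ (i : ℕ) (h : i + 1 < d), t = (hanoiB d i h) ^ 2} ∪
         {t | ∃ (i : ℕ) (h : i + 2 < d),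
            t = (hanoiB d (i + 1) h * hanoiB d i (Nat.lt_of_succ_lt h)) ^ 3} ∪
         {t | ∃ (i j : ℕ) (hi : i + 1 < d) (hj : j + 1 < d),
            (i + 1 < j ∨ j + 1 < i) ∧ t = ⁅hanoiB d i hi, hanoiB d j hj⁆}) :=
  hanoiGroup_stL_one_general d

end TreeFract
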